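/- arXiv:math/9904091 — 4 statements merged into one kernel-verified Lean document; each statement's English description precedes it below -/
import Mathlib

section
/- Let V be an (n+1)-dimensional complex vector space with basis v_0, …, v_n, and let ω ∈ ⋀²V be a nonzero decomposable bivector (i.e. ω = v ∧ v' for some v, v' ∈ V). Write ω = Σ_{0 ≤ i < j ≤ n} x_{i,j} (v_i ∧ v_j) in the induced basis of ⋀²V. Then there exists a pair (i₀, j₀) with 0 ≤ i₀ < j₀ ≤ n such that x_{i₀,j₀} ≠ 0 and x_{i,j} = 0 for every pair (i,j) with i < j, i + j ≤ i₀ + j₀ and (i,j) ≠ (i₀,j₀). In other words, ω = x_{i₀,j₀}(v_{i₀} ∧ v_{j₀}) + Σ_{i+j > i₀+j₀} x_{i,j}(v_i ∧ v_j) with x_{i₀,j₀} ≠ 0. -/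
open ExteriorAlgebra

/-- Bilinear multilinear map `(w 0, w 1) ↦ φ (w 0) * ψ (w 1)`. -/
noncomputable def bil2 {V : Type*} [AddCommGroup V] [Module ℂ V] (φ ψ : V →ₗ[ℂ] ℂ) :
    MultilinearMap ℂ (fun _ : Fin 2 => V) ℂ :=
  (MultilinearMap.mkPiAlgebra ℂ (Fin 2) ℂ).compLinearMap ![φ, ψ]

lemma bil2_apply {V : Type*} [AddCommGroup V] [Module ℂ V] (φ ψ : V →ₗ[ℂ] ℂ) (w : Fin 2 → V) :
    bil2 φ ψ w = φ (w 0) * ψ (w 1) := by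
  simp [bil2, Fin.prod_univ_two]

/-- Degree-2 alternating map `(w 0, w 1) ↦ φ (w 0) * ψ (w 1) - ψ (w 0) * φ (w 1)`. -/
noncomputable def alt2 {V : Type*} [AddCommGroup V] [Module ℂ V] (φ ψ : V →ₗ[ℂ] ℂ) :
    V [⋀^Fin 2]→ₗ[ℂ] ℂ where
  toMultilinearMap := bil2 φ ψ - bil2 ψ φ
  map_eq_zero_of_eq' := by
    intro w a c hac hne
    have h01 : w 0 = w 1 := by
      fin_cases a <;> fin_cases c <;> simp_all
    simp [bil2_apply, h01, mul_comm]

lemma alt2_apply {V : Type*} [AddCommGroup V] [Module ℂ V] (φ ψ : V →ₗ[ℂ] ℂ) (w : Fin 2 → V) :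
    alt2 φ ψ w = φ (w 0) * ψ (w 1) - ψ (w 0) * φ (w 1) := by
  show (bil2 φ ψ - bil2 ψ φ) w = _
  simp [bil2_apply]

noncomputable def lift2 {V : Type*} [AddCommGroup V] [Module ℂ V] (φ ψ : V →ₗ[ℂ] ℂ) :
    ExteriorAlgebra ℂ V →ₗ[ℂ] ℂ :=
  liftAlternating (fun k => match k with
    | 2 => alt2 φ ψ
    | _ => 0)

lemma lift2_mul {V : Type*} [AddCommGroup V] [Module ℂ V] (φ ψ : V →ₗ[ℂ] ℂ) (u w : V) :
    lift2 φ ψ (ι ℂ u * ι ℂ w) = φ u * ψ w - ψ u * φ w := by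
  have h : ι ℂ u * ι ℂ w = ιMulti ℂ 2 ![u, w] := by
    simp [ιMulti_apply, List.ofFn_succ]
  rw [h, lift2, liftAlternating_apply_ιMulti]
  show alt2 φ ψ ![u, w] = _
  rw [alt2_apply]
  simp

/-- Let `V` be an `(n+1)`-dimensional complex vector space with basis
`v_0, …, v_n` (given by `b`), and let `ω ∈ ⋀²V` be a nonzero decomposable bivector,
`ω = v ∧ v'`.  Writing `ω = Σ_{i<j} x_{i,j} (v_i ∧ v_j)` in the induced basis of `⋀²V`,
there exists a pair `(i₀, j₀)` with `i₀ < j₀`, `x_{i₀,j₀} ≠ 0`, and `x_{i,j} = 0` for every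
pair `(i,j)` with `i < j`, `i + j ≤ i₀ + j₀` and `(i,j) ≠ (i₀,j₀)`. -/
theorem statement0 (n : ℕ) (V : Type*) [AddCommGroup V] [Module ℂ V]
    (b : Module.Basis (Fin (n + 1)) ℂ V) (v v' : V)
    (ω : ExteriorAlgebra ℂ V)
    (hdecomp : ω = ι ℂ v * ι ℂ v')
    (hne : ω ≠ 0)
    (x : Fin (n + 1) → Fin (n + 1) → ℂ)
    (hx : ω = ∑ i : Fin (n + 1), ∑ j : Fin (n + 1),
        if i < j then x i j • (ι ℂ (b i) * ι ℂ (b j)) else 0) :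
    ∃ i₀ j₀ : Fin (n + 1), i₀ < j₀ ∧ x i₀ j₀ ≠ 0 ∧
      ∀ i j : Fin (n + 1), i < j → (i : ℕ) + (j : ℕ) ≤ (i₀ : ℕ) + (j₀ : ℕ) →
        (i, j) ≠ (i₀, j₀) → x i j = 0 := by
  classical
  -- the coefficient formula
  have key : ∀ i j : Fin (n + 1), i < j →
      x i j = b.repr v i * b.repr v' j - b.repr v j * b.repr v' i := by
    intro i j hij
    have h1 := congrArg (lift2 (b.coord i) (b.coord j)) hx
    rw [hdecomp, lift2_mul] at h1
    simp only [map_sum] at h1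
    have h2 : ∀ k l : Fin (n + 1),
        lift2 (b.coord i) (b.coord j) (if k < l then x k l • (ι ℂ (b k) * ι ℂ (b l)) else 0)
        = if l = j then (if k = i then x i j else 0) else 0 := by
      intro k l
      rw [apply_ite (lift2 (b.coord i) (b.coord j)), map_zero, map_smul, lift2_mul]
      simp only [Module.Basis.coord_apply, Module.Basis.repr_self, Finsupp.single_apply, smul_eq_mul]
      split_ifs <;> subst_vars <;> try ring1
      all_goals (exfalso; simp only [Fin.lt_def] at *; omega)
    simp only [h2] at h1
    simp only [Finset.sum_ite_eq', Finset.mem_univ, if_true] at h1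
    rw [← h1]
    simp [Module.Basis.coord_apply]
  -- nonemptiness of the set of nonzero coefficients
  set S : Finset (Fin (n + 1) × Fin (n + 1)) :=
    Finset.univ.filter (fun p => p.1 < p.2 ∧ x p.1 p.2 ≠ 0) with hS
  have hSne : S.Nonempty := by
    by_contra h
    apply hne
    rw [hx]
    rw [Finset.not_nonempty_iff_eq_empty, hS, Finset.filter_eq_empty_iff] at h
    refine Finset.sum_eq_zero fun i _ => Finset.sum_eq_zero fun j _ => ?_
    split_ifs with hij
    · have := h (Finset.mem_univ (i, j))
      simp only [not_and, not_not] at this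
      rw [this hij, zero_smul]
    · rfl
  obtain ⟨p, hpS, hpmin⟩ := S.exists_min_image (fun p => (p.1 : ℕ) + (p.2 : ℕ)) hSne
  rw [hS, Finset.mem_filter] at hpS
  obtain ⟨-, hp1, hp2⟩ := hpS
  refine ⟨p.1, p.2, hp1, hp2, ?_⟩
  intro i j hij hsum hne'
  by_contra hxij
  have hmem : (i, j) ∈ S := by
    rw [hS, Finset.mem_filter]; exact ⟨Finset.mem_univ _, hij, hxij⟩
  have hge := hpmin (i, j) hmem
  simp only at hge
  have hseq : (i : ℕ) + (j : ℕ) = (p.1 : ℕ) + (p.2 : ℕ) := le_antisymm hsum hge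
  -- pairs with smaller index sum vanish
  have hzero : ∀ k l : Fin (n + 1), k < l → (k : ℕ) + (l : ℕ) < (p.1 : ℕ) + (p.2 : ℕ) →
      x k l = 0 := by
    intro k l hkl hlt
    by_contra hxkl
    have hm : (k, l) ∈ S := by rw [hS, Finset.mem_filter]; exact ⟨Finset.mem_univ _, hkl, hxkl⟩
    have := hpmin (k, l) hm
    simp only at this
    omega
  have hine : i ≠ p.1 := by
    intro h
    apply hne'
    have hj2 : (j : ℕ) = (p.2 : ℕ) := by rw [h] at hseq; omega
    exact Prod.ext_iff.mpr ⟨h, Fin.ext hj2⟩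
  have hp1' := hp1
  rw [Fin.lt_def] at hp1'
  have hij' := hij
  rw [Fin.lt_def] at hij'
  rcases lt_or_gt_of_ne (Fin.val_ne_of_ne hine) with hlt | hgt
  · -- i < p.1, hence p.2 < j ; chain i < p.1 < p.2 < j
    have hj : (p.2 : ℕ) < (j : ℕ) := by omega
    have e1 : x i p.1 = 0 := hzero i p.1 (by rw [Fin.lt_def]; omega) (by omega)
    have e2 : x i p.2 = 0 := hzero i p.2 (by rw [Fin.lt_def]; omega) (by omega)
    rw [key i p.1 (by rw [Fin.lt_def]; omega)] at e1
    rw [key i p.2 (by rw [Fin.lt_def]; omega)] at e2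
    have hijk := key i j hij
    have hpk := key p.1 p.2 hp1
    have hmul : x i j * x p.1 p.2 = 0 := by
      rw [hijk, hpk]
      linear_combination (b.repr v p.1 * b.repr v' j - b.repr v j * b.repr v' p.1) * e2
        - (b.repr v p.2 * b.repr v' j - b.repr v j * b.repr v' p.2) * e1
    rcases mul_eq_zero.mp hmul with h | h
    · exact hxij h
    · exact hp2 h
  · -- p.1 < i, hence j < p.2 ; chain p.1 < i < j < p.2
    have hj : (j : ℕ) < (p.2 : ℕ) := by omega
    have e1 : x p.1 i = 0 := hzero p.1 i (by rw [Fin.lt_def]; omega) (by omega)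
    have e2 : x p.1 j = 0 := hzero p.1 j (by rw [Fin.lt_def]; omega) (by omega)
    rw [key p.1 i (by rw [Fin.lt_def]; omega)] at e1
    rw [key p.1 j (by rw [Fin.lt_def]; omega)] at e2
    have hijk := key i j hij
    have hpk := key p.1 p.2 hp1
    have hmul : x p.1 p.2 * x i j = 0 := by
      rw [hijk, hpk]
      linear_combination (b.repr v i * b.repr v' p.2 - b.repr v p.2 * b.repr v' i) * e2
        - (b.repr v j * b.repr v' p.2 - b.repr v p.2 * b.repr v' j) * e1
    rcases mul_eq_zero.mp hmul with h | h
    · exact hp2 h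
    · exact hxij h
end

section
/- Let n ≥ 1 and let x, y : Fin (n+1) → ℂ be linearly independent vectors. For 0 ≤ i < j ≤ n set z_{i,j} = x_i y_j − x_j y_i, and let k₀ be the minimum of i + j over all pairs (i,j) with i < j and z_{i,j} ≠ 0 (this set is nonempty since x and y are linearly independent). Then there is exactly one pair (i,j) with i < j, i + j = k₀ and z_{i,j} ≠ 0. -/
/-- Let `n ≥ 1` and let `x, y : Fin (n+1) → ℂ` be linearly independent.
For `i < j` set `z_{i,j} = x_i y_j − x_j y_i`, and let `k₀` be the minimum of `i + j` over
all pairs `(i,j)` with `i < j` and `z_{i,j} ≠ 0` (this set is nonempty since `x` and `y`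
are linearly independent).  Then there is exactly one pair `(i,j)` with `i < j`,
`i + j = k₀` and `z_{i,j} ≠ 0`. -/
theorem statement1 (n : ℕ) (hn : 1 ≤ n) (x y : Fin (n + 1) → ℂ)
    (hxy : LinearIndependent ℂ ![x, y])
    (z : Fin (n + 1) → Fin (n + 1) → ℂ)
    (hz : ∀ i j : Fin (n + 1), z i j = x i * y j - x j * y i)
    (k₀ : ℕ)
    (hk₀ : k₀ = sInf {k : ℕ | ∃ i j : Fin (n + 1), i < j ∧ (i : ℕ) + (j : ℕ) = k ∧ z i j ≠ 0}) :
    ∃! p : Fin (n + 1) × Fin (n + 1),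
      p.1 < p.2 ∧ (p.1 : ℕ) + (p.2 : ℕ) = k₀ ∧ z p.1 p.2 ≠ 0 := by
  set S : Set ℕ := {k : ℕ | ∃ i j : Fin (n + 1), i < j ∧ (i : ℕ) + (j : ℕ) = k ∧ z i j ≠ 0}
    with hS
  -- nonemptiness
  have hne : S.Nonempty := by
    by_contra hemp
    have hall : ∀ i j : Fin (n + 1), z i j = 0 := by
      intro i j
      rcases lt_trichotomy i j with h | h | h
      · by_contra hzne
        exact hemp ⟨(i : ℕ) + j, i, j, h, rfl, hzne⟩
      · subst h; rw [hz]; ring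
      · by_contra hzne
        have hzne' : z j i ≠ 0 := by
          rw [hz] at hzne ⊢
          intro h0; apply hzne; rw [sub_eq_zero] at h0 ⊢; exact h0.symm
        exact hemp ⟨(j : ℕ) + i, j, i, h, rfl, hzne'⟩
    rw [LinearIndependent.pair_iff] at hxy
    by_cases hx : x = 0
    · have := (hxy 1 0 (by simp [hx])).1
      exact one_ne_zero this
    · obtain ⟨i, hi⟩ := Function.ne_iff.mp hx
      have hyx : y i • x - x i • y = 0 := by
        funext j
        have := hall i j
        rw [hz] at this
        simp only [Pi.sub_apply, Pi.smul_apply, smul_eq_mul, Pi.zero_apply]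
        linear_combination -this
      have := (hxy (y i) (-(x i)) (by rw [neg_smul, ← sub_eq_add_neg]; exact hyx)).2
      exact hi (by simpa using this)
  have hk₀mem : k₀ ∈ S := hk₀ ▸ Nat.sInf_mem hne
  have hmin : ∀ a b : Fin (n + 1), a < b → z a b ≠ 0 → k₀ ≤ (a : ℕ) + b := by
    intro a b hab hzab
    exact hk₀ ▸ Nat.sInf_le ⟨a, b, hab, rfl, hzab⟩
  -- key: two distinct pairs with the same minimal sum is impossible
  have hkey : ∀ i j k l : Fin (n + 1), i < j → k < l → (i : ℕ) + j = k₀ → (k : ℕ) + l = k₀ →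
      z i j ≠ 0 → z k l ≠ 0 → (i : ℕ) < k → False := by
    intro i j k l hij hkl hsum1 hsum2 hzij hzkl hik
    have hklv : (k : ℕ) < l := hkl
    have hlj : (l : ℕ) < j := by omega
    have h1 : z i k = 0 := by
      by_contra h
      have := hmin i k (by exact_mod_cast hik) h
      omega
    have h2 : z i l = 0 := by
      by_contra h
      have := hmin i l (by exact_mod_cast (by omega : (i : ℕ) < l)) h
      omega
    have hmul : z i j * z k l = 0 := by
      rw [hz] at h1 h2 ⊢
      rw [hz]
      linear_combination (x j * y l - x l * y j) * h1 - (x j * y k - x k * y j) * h2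
    exact mul_ne_zero hzij hzkl hmul
  obtain ⟨i, j, hij, hsum, hzij⟩ := hk₀mem
  refine ⟨(i, j), ⟨hij, hsum, hzij⟩, ?_⟩
  rintro ⟨k, l⟩ ⟨hkl, hsum2, hzkl⟩
  have h1 : (k : ℕ) = i := by
    rcases lt_trichotomy (k : ℕ) (i : ℕ) with h | h | h
    · exact absurd (hkey k l i j hkl hij hsum2 hsum hzkl hzij h) (fun h => h)
    · exact h
    · exact absurd (hkey i j k l hij hkl hsum hsum2 hzij hzkl h) (fun h => h)
  have hsum2' : (k : ℕ) + (l : ℕ) = k₀ := hsum2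
  have h2 : (l : ℕ) = (j : ℕ) := by omega
  exact Prod.ext (Fin.ext h1) (Fin.ext h2)
end

section
/- Let V = ℂ^{n+1} with standard basis e_0, …, e_n (n ≥ 1), and let T be the unique linear endomorphism of ⋀²V satisfying T(e_i ∧ e_j) = (n−i)(e_{i+1} ∧ e_j) + (n−j)(e_i ∧ e_{j+1}) for all 0 ≤ i < j ≤ n, with the convention e_{n+1} = 0. Then for every pair 0 ≤ i₀ < j₀ ≤ n, setting k = (2n−1) − i₀ − j₀, there exists a positive integer m such that T^k(e_{i₀} ∧ e_{j₀}) = m · (e_{n−1} ∧ e_n). -/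
open ExteriorAlgebra

/-- The wedge product of two vectors, as an element of the second exterior power. -/
noncomputable def wedge {V : Type*} [AddCommGroup V] [Module ℂ V] (u w : V) :
    ⋀[ℂ]^2 V :=
  ⟨ι ℂ u * ι ℂ w, by
    have h : ι ℂ u * ι ℂ w ∈
        LinearMap.range (ι ℂ : V →ₗ[ℂ] ExteriorAlgebra ℂ V) *
          LinearMap.range (ι ℂ : V →ₗ[ℂ] ExteriorAlgebra ℂ V) :=
      Submodule.mul_mem_mul (LinearMap.mem_range_self _ u) (LinearMap.mem_range_self _ w)
    simpa [pow_two] using h⟩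

/-- The standard basis vector `e_i` of `ℂ^{n+1}` for `0 ≤ i ≤ n`; by convention `e i = 0`
for `i > n` (in particular `e (n+1) = 0`). -/
noncomputable def e (n : ℕ) (i : ℕ) : Fin (n + 1) → ℂ :=
  fun k => if (k : ℕ) = i then 1 else 0

lemma wedge_self {V : Type*} [AddCommGroup V] [Module ℂ V] (u : V) : wedge u u = 0 := by
  apply Subtype.ext
  simp [wedge, ι_sq_zero]

lemma wedge_zero_right {V : Type*} [AddCommGroup V] [Module ℂ V] (u : V) :
    wedge u (0 : V) = 0 := by
  apply Subtype.ext
  simp [wedge]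

lemma e_top (n : ℕ) : e n (n + 1) = 0 := by
  funext k
  have hk := k.isLt
  simp only [e]
  rw [if_neg (by omega)]
  rfl

set_option maxHeartbeats 1000000 in
lemma statement2_aux (n : ℕ) (hn : 1 ≤ n)
    (T : Module.End ℂ (⋀[ℂ]^2 (Fin (n + 1) → ℂ)))
    (hT : ∀ i j : ℕ, i < j → j ≤ n →
      T (wedge (e n i) (e n j)) =
        (n - i) • wedge (e n (i + 1)) (e n j) + (n - j) • wedge (e n i) (e n (j + 1))) :
    ∀ k i j : ℕ, i < j → j ≤ n → 2 * n - 1 - i - j = k →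
      ∃ m : ℕ, 0 < m ∧
        (T ^ k) (wedge (e n i) (e n j)) = m • wedge (e n (n - 1)) (e n n) := by
  intro k
  induction k with
  | zero =>
    intro i j hij hjn hk
    have hi : i = n - 1 := by omega
    have hj : j = n := by omega
    subst hi hj
    exact ⟨1, by norm_num⟩
  | succ k ih =>
    intro i j hij hjn hk
    have hstep : (T ^ (k + 1)) (wedge (e n i) (e n j)) =
        (T ^ k) (T (wedge (e n i) (e n j))) := by
      rw [pow_succ]
      rfl
    rw [hstep, hT i j hij hjn, map_add, map_nsmul, map_nsmul]
    by_cases hjn' : j = n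
    · rw [hjn']
      have hi : i + 1 < n := by omega
      obtain ⟨m₁, hm₁, hTm₁⟩ := ih (i + 1) n hi le_rfl (by omega)
      rw [hTm₁, e_top, wedge_zero_right, map_zero, smul_zero, add_zero, smul_smul]
      refine ⟨(n - i) * m₁, ?_, rfl⟩
      have : 0 < n - i := by omega
      positivity
    · have hjlt : j < n := lt_of_le_of_ne hjn hjn'
      obtain ⟨m₂, hm₂, hTm₂⟩ := ih i (j + 1) (by omega) (by omega) (by omega)
      by_cases hij' : i + 1 = j
      · rw [hij', wedge_self, map_zero, smul_zero, zero_add, hTm₂, smul_smul]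
        refine ⟨(n - j) * m₂, ?_, rfl⟩
        have : 0 < n - j := by omega
        positivity
      · obtain ⟨m₁, hm₁, hTm₁⟩ := ih (i + 1) j (by omega) hjn (by omega)
        rw [hTm₁, hTm₂, smul_smul, smul_smul, ← add_smul]
        refine ⟨(n - i) * m₁ + (n - j) * m₂, ?_, rfl⟩
        have : 0 < n - j := by omega
        positivity


/-- Let `V = ℂ^{n+1}` with standard basis `e_0, …, e_n` (`n ≥ 1`), and let
`T` be the unique linear endomorphism of `⋀²V` satisfying
`T(e_i ∧ e_j) = (n−i)(e_{i+1} ∧ e_j) + (n−j)(e_i ∧ e_{j+1})` for all `0 ≤ i < j ≤ n`, with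
the convention `e_{n+1} = 0`.  Then for every pair `0 ≤ i₀ < j₀ ≤ n`, setting
`k = (2n−1) − i₀ − j₀`, there exists a positive integer `m` such that
`T^k(e_{i₀} ∧ e_{j₀}) = m · (e_{n−1} ∧ e_n)`. -/
theorem statement2 (n : ℕ) (hn : 1 ≤ n)
    (T : Module.End ℂ (⋀[ℂ]^2 (Fin (n + 1) → ℂ)))
    (hT : ∀ i j : ℕ, i < j → j ≤ n →
      T (wedge (e n i) (e n j)) =
        (n - i) • wedge (e n (i + 1)) (e n j) + (n - j) • wedge (e n i) (e n (j + 1)))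
    (i₀ j₀ : ℕ) (hij : i₀ < j₀) (hj : j₀ ≤ n) :
    ∃ m : ℕ, 0 < m ∧
      (T ^ (2 * n - 1 - i₀ - j₀)) (wedge (e n i₀) (e n j₀)) =
        m • wedge (e n (n - 1)) (e n n) :=
  statement2_aux n hn T hT _ i₀ j₀ hij hj rfl
end

section
/- For every n ≥ 1, the multiset { i + j : 0 ≤ i < j ≤ n } of pairwise sums of distinct indices equals the disjoint multiset union, over j = 0, 1, …, ⌊(n−1)/2⌋, of the integer intervals {2j+1, 2j+2, …, 2n−1−2j}. -/
/-- For every `n ≥ 1`, the multiset `{ i + j : 0 ≤ i < j ≤ n }` of pairwise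
sums of distinct indices equals the disjoint multiset union, over `j = 0, 1, …, ⌊(n−1)/2⌋`,
of the integer intervals `{2j+1, 2j+2, …, 2n−1−2j}`. -/
theorem statement4 (n : ℕ) (hn : 1 ≤ n) :
    (((Finset.range (n + 1) ×ˢ Finset.range (n + 1)).filter
        (fun p : ℕ × ℕ => p.1 < p.2)).val.map (fun p : ℕ × ℕ => p.1 + p.2)) =
      (Finset.range ((n - 1) / 2 + 1)).val.bind
        (fun j => (Finset.Icc (2 * j + 1) (2 * n - 1 - 2 * j)).val) := by
  classical
  set S := (Finset.range (n + 1) ×ˢ Finset.range (n + 1)).filter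
      (fun p : ℕ × ℕ => p.1 < p.2) with hS
  set e : ℕ × ℕ → (Σ _ : ℕ, ℕ) := fun p => ⟨min p.1 (n - p.2), p.1 + p.2⟩ with he
  set T := (Finset.range ((n - 1) / 2 + 1)).sigma
      (fun j => Finset.Icc (2 * j + 1) (2 * n - 1 - 2 * j)) with hT
  have hinj : Set.InjOn e S := by
    intro p hp q hq hpq
    simp only [hS, Finset.mem_filter, Finset.mem_product, Finset.mem_range] at hp hq
    simp only [he, Sigma.mk.inj_iff, heq_eq_eq] at hpq
    have := hpq.1
    have := hpq.2
    obtain ⟨p1, p2⟩ := p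
    obtain ⟨q1, q2⟩ := q
    simp_all
    omega
  have himg : S.image e = T := by
    ext ⟨a, k⟩
    simp only [hS, hT, Finset.mem_image, Finset.mem_filter, Finset.mem_product,
      Finset.mem_range, Finset.mem_sigma, Finset.mem_Icc, he, Sigma.mk.inj_iff, heq_eq_eq,
      Prod.exists]
    constructor
    · rintro ⟨i, j, ⟨⟨hi, hj⟩, hij⟩, ha, hk⟩
      omega
    · rintro ⟨ha, hk1, hk2⟩
      refine ⟨a + (k - n), k - (a + (k - n)), ?_, ?_, ?_⟩ <;> omega
  have h1 : S.val.map (fun p : ℕ × ℕ => p.1 + p.2) = (S.image e).val.map Sigma.snd := by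
    rw [Finset.image_val_of_injOn hinj, Multiset.map_map]
    rfl
  rw [h1, himg]
  show Multiset.map Sigma.snd ((Finset.range ((n - 1) / 2 + 1)).val.sigma
      (fun j => (Finset.Icc (2 * j + 1) (2 * n - 1 - 2 * j)).val)) = _
  rw [Multiset.sigma]
  rw [Multiset.map_bind]
  simp [Multiset.map_map, Function.comp]
end
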